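/- Let n ≥ 1, let φ : [0,1] × ℝⁿ → ℝⁿ be continuous, continuously differentiable in the second variable with the derivative jointly continuous, and suppose φ(t,0) = 0 for all t ∈ [0,1]. Let A(t) := D_u φ(t, ·)(0) ∈ L(ℝⁿ, ℝⁿ) be the derivative of φ(t, ·) at 0, and let V ⊆ ℝⁿ × ℝⁿ be a linear subspace. Assume that the only continuously differentiable function u : [0,1] → ℝⁿ satisfying u'(t) = A(t) u(t) for all t ∈ [0,1] and (u(0), u(1)) ∈ V is u ≡ 0. Then there exists ε > 0 such that every continuously differentiable function u : [0,1] → ℝⁿ satisfying u'(t) = φ(t, u(t)) for all t ∈ [0,1], (u(0), u(1)) ∈ V, and sup_{t ∈ [0,1]} ‖u(t)‖ ≤ ε is identically zero. In other words, if the linearised boundary value problem at the trivial solution has only the trivial solution, then the trivial solution of the nonlinear boundary value problem is isolated among small solutions. -/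

import Mathlib

/-!
The endpoint map `Y : γ(0) ↦ γ(1)` of the linearised equation `γ' = A(t) γ` is linear, and the
hypothesis says that its graph meets `V` only in `0`; in finite dimension this gives a constant `K`
with `‖x‖ ≤ K ‖Y x - y‖` for all `(x, y) ∈ V`. By continuity of `D_u φ` and compactness of `[0,1]`,
every sufficiently small solution `u` satisfies `‖φ(t, u) - A(t) u‖ ≤ η ‖u‖` for a prescribed
`η ≤ 1`, and Grönwall's inequality then gives `‖u(1) - Y u(0)‖ ≤ η C ‖u(0)‖` with `C` depending only
on `A`. For `(u(0), u(1)) ∈ V` this means `‖u(0)‖ ≤ K C η ‖u(0)‖`, so `u(0) = 0` once `K C η < 1`,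
and then `u ≡ 0`, again by Grönwall.
-/

open Set Metric Filter Topology
open scoped NNReal

lemma IsCompact.exists_nnnorm_le_of_continuousOn {X F : Type*} [TopologicalSpace X]
    [SeminormedAddCommGroup F] {s : Set X} {f : X → F} (hs : IsCompact s)
    (hf : ContinuousOn f s) : ∃ C : ℝ≥0, ∀ x ∈ s, ‖f x‖₊ ≤ C := by
  obtain ⟨C, hC⟩ := hs.exists_bound_of_continuousOn hf
  exact ⟨C.toNNReal, fun x hx => by
    rw [← NNReal.coe_le_coe, coe_nnnorm]
    exact (hC x hx).trans (Real.le_coe_toNNReal C)⟩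

theorem LinearMap.exists_norm_le_mul_norm_sub {𝕜 E F : Type*} [NontriviallyNormedField 𝕜]
    [CompleteSpace 𝕜] [NormedAddCommGroup E] [NormedSpace 𝕜 E] [FiniteDimensional 𝕜 E]
    [NormedAddCommGroup F] [NormedSpace 𝕜 F] (Y : E →ₗ[𝕜] F) {V : Submodule 𝕜 (E × F)}
    (hV : IsClosed (V : Set (E × F))) (hY : ∀ x, (x, Y x) ∈ V → x = 0) :
    ∃ K : ℝ≥0, ∀ x y, (x, y) ∈ V → ‖x‖ ≤ K * ‖Y x - y‖ := by
  -- the quotient `(E × F) ⧸ V` is a normed (not only seminormed) space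
  have : IsClosed (V : Set (E × F)) := hV
  set T := V.mkQ ∘ₗ (LinearMap.id.prod Y)
  have hT : LinearMap.ker T = ⊥ := by
    refine LinearMap.ker_eq_bot'.2 fun x hx => hY x ?_
    simpa [T, Submodule.Quotient.mk_eq_zero] using hx
  obtain ⟨K, -, hK⟩ := T.exists_antilipschitzWith hT
  refine ⟨K, fun x y hxy => ?_⟩
  have hTx : T x = V.mkQ (0, Y x - y) := by
    have h0 : V.mkQ (x, y) = 0 := (Submodule.Quotient.mk_eq_zero V).2 hxy
    rw [show ((0 : E), Y x - y) = (x, Y x) - (x, y) by simp, map_sub, h0, sub_zero]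
    rfl
  calc ‖x‖ ≤ K * ‖T x‖ := by simpa using hK.le_mul_dist x 0
    _ ≤ K * ‖Y x - y‖ := by
      gcongr
      rw [hTx]
      exact (Submodule.Quotient.norm_mk_le V _).trans (by simp)

theorem IsCompact.exists_pos_forall_norm_sub_le_mul {T E F : Type*} [TopologicalSpace T]
    [NormedAddCommGroup E] [NormedSpace ℝ E] [NormedAddCommGroup F] [NormedSpace ℝ F]
    {s : Set T} (hs : IsCompact s) {f : T → E → F} {f' : T → E → E →L[ℝ] F}
    (hf : ∀ t ∈ s, ∀ x, HasFDerivAt (f t) (f' t x) x)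
    (hf' : ContinuousOn (fun p : T × E => f' p.1 p.2) (s ×ˢ univ)) {η : ℝ} (hη : 0 < η) :
    ∃ r > 0, ∀ t ∈ s, ∀ x, ‖x‖ ≤ r → ‖f t x - f t 0 - f' t 0 x‖ ≤ η * ‖x‖ := by
  have hnear : ∀ t ∈ s, ∀ᶠ z : E × T in 𝓝 (0, t), z.2 ∈ s → dist (f' z.2 z.1) (f' z.2 0) < η := by
    intro t ht
    have hcont : ∀ᶠ p : T × E in 𝓝 (t, 0), p.1 ∈ s → dist (f' p.1 p.2) (f' t 0) < η / 2 := by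
      have := Metric.tendsto_nhds.1 (hf' (t, 0) ⟨ht, trivial⟩) (η / 2) (by positivity)
      simpa [eventually_nhdsWithin_iff] using this
    have h₁ := (continuous_swap.tendsto ((0 : E), t)).eventually hcont
    have h₂ := ((continuous_snd.prodMk continuous_const).tendsto ((0 : E), t)).eventually hcont
    filter_upwards [h₁, h₂] with z hz₁ hz₂ hz
    calc dist (f' z.2 z.1) (f' z.2 0) ≤ dist (f' z.2 z.1) (f' t 0) + dist (f' z.2 0) (f' t 0) :=
          dist_triangle_right _ _ _
      _ < η / 2 + η / 2 := add_lt_add (hz₁ hz) (hz₂ hz)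
      _ = η := add_halves η
  obtain ⟨ε, hε, hball⟩ := Metric.eventually_nhds_iff.1
    (hs.eventually_forall_of_forall_eventually (P := fun x t => t ∈ s → dist (f' t x) (f' t 0) < η)
      hnear)
  refine ⟨ε / 2, half_pos hε, fun t ht x hx => ?_⟩
  have hsub : closedBall (0 : E) (ε / 2) ⊆ ball 0 ε := closedBall_subset_ball (half_lt_self hε)
  have := (convex_closedBall (0 : E) (ε / 2)).norm_image_sub_le_of_norm_hasFDerivWithin_le'
    (fun y _ => (hf t ht y).hasFDerivWithinAt)
    (fun y hy => by simpa only [dist_eq_norm] using (hball (mem_ball.1 (hsub hy)) t ht ht).le)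
    (mem_closedBall_self (half_pos hε).le) (mem_closedBall_zero_iff.2 hx)
  rwa [sub_zero] at this

section IntegralCurve

variable {E : Type*} [NormedAddCommGroup E] [NormedSpace ℝ E]

lemma IsIntegralCurveOn.congr {γ γ' : ℝ → E} {v : ℝ → E → E} {s : Set ℝ}
    (h : IsIntegralCurveOn γ v s) (hs : EqOn γ' γ s) : IsIntegralCurveOn γ' v s :=
  fun t ht => by
    rw [hs ht]
    exact (h t ht).congr_of_mem hs ht

lemma IsIntegralCurveOn.union {γ : ℝ → E} {v : ℝ → E → E} {s s' : Set ℝ}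
    (hs : IsClosed s) (hs' : IsClosed s') (h : IsIntegralCurveOn γ v s)
    (h' : IsIntegralCurveOn γ v s') : IsIntegralCurveOn γ v (s ∪ s') := by
  have key : ∀ {u}, IsClosed u → IsIntegralCurveOn γ v u → ∀ t,
      HasDerivWithinAt γ (v t (γ t)) u t := fun {u} hu h t => by
    by_cases ht : t ∈ u
    · exact h t ht
    · exact HasFDerivWithinAt.of_notMem_closure (hu.closure_eq.symm ▸ ht)
  exact fun t _ => (key hs h t).union (key hs' h' t)

lemma IsIntegralCurveOn.hasDerivWithinAt_Ici {γ : ℝ → E} {v : ℝ → E → E} {a b : ℝ}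
    (h : IsIntegralCurveOn γ v (Icc a b)) :
    ∀ t ∈ Ico a b, HasDerivWithinAt γ (v t (γ t)) (Ici t) t := fun t ht =>
  (h t (Ico_subset_Icc_self ht)).mono_of_mem_nhdsWithin (Icc_mem_nhdsGE_of_mem ht)

variable {A : ℝ → E →L[ℝ] E} {a b : ℝ}

lemma IsIntegralCurveOn.add_clm {γ₁ γ₂ : ℝ → E} {s : Set ℝ}
    (h₁ : IsIntegralCurveOn γ₁ (fun t => A t) s) (h₂ : IsIntegralCurveOn γ₂ (fun t => A t) s) :
    IsIntegralCurveOn (γ₁ + γ₂) (fun t => A t) s := fun t ht => by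
  simpa using (h₁ t ht).add (h₂ t ht)

lemma IsIntegralCurveOn.const_smul_clm {γ : ℝ → E} {s : Set ℝ}
    (h : IsIntegralCurveOn γ (fun t => A t) s) (c : ℝ) :
    IsIntegralCurveOn (c • γ) (fun t => A t) s := fun t ht => by
  simpa using (h t ht).const_smul c

theorem exists_isIntegralCurveOn_clm_of_mul_le [CompleteSpace E] {B : ℝ≥0} (hab : a ≤ b)
    (hA : ContinuousOn A (Icc a b)) (hB : ∀ t ∈ Icc a b, ‖A t‖₊ ≤ B)
    (hlen : 2 * B * (b - a) ≤ 1) (x : E) :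
    ∃ γ : ℝ → E, γ a = x ∧ IsIntegralCurveOn γ (fun t => A t) (Icc a b) :=
  IsPicardLindelof.exists_eq_forall_mem_Icc_hasDerivWithinAt₀
    (t₀ := ⟨a, left_mem_Icc.2 hab⟩) (a := ‖x‖₊) (L := 2 * B * ‖x‖₊)
    { lipschitzOnWith := fun t ht => ((A t).lipschitz.weaken (hB t ht)).lipschitzOnWith
      continuousOn := fun z _ => hA.clm_apply continuousOn_const
      norm_le := fun t ht z hz => by
        have hz : ‖z‖ ≤ 2 * ‖x‖ := by
          have := norm_le_of_mem_closedBall hz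
          rw [coe_nnnorm] at this
          linarith
        have hAt : ‖A t‖ ≤ B := hB t ht
        push_cast
        calc ‖A t z‖ ≤ ‖A t‖ * ‖z‖ := (A t).le_opNorm z
          _ ≤ B * (2 * ‖x‖) := by gcongr
          _ = 2 * B * ‖x‖ := by ring
      mul_max_le := by
        push_cast
        rw [sub_self, max_eq_left (sub_nonneg.2 hab), sub_zero]
        nlinarith [norm_nonneg x] }

theorem exists_isIntegralCurveOn_clm [CompleteSpace E] (hab : a ≤ b)
    (hA : ContinuousOn A (Icc a b)) (x : E) :
    ∃ γ : ℝ → E, γ a = x ∧ IsIntegralCurveOn γ (fun t => A t) (Icc a b) := by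
  obtain ⟨B, hB⟩ := isCompact_Icc.exists_nnnorm_le_of_continuousOn hA
  set h : ℝ := 1 / (2 * B + 1)
  have hh : 0 < h := by positivity
  have hstep : 2 * B * h ≤ 1 := by
    rw [mul_one_div, div_le_one (by positivity)]
    linarith
  have hsub : ∀ {c d}, a ≤ c → d ≤ b → Icc c d ⊆ Icc a b := Icc_subset_Icc
  -- Picard-Lindelöf on steps of length `h`, glued backwards from `b`
  suffices H : ∀ k : ℕ, ∀ c ∈ Icc a b, b - c ≤ k * h → ∀ y : E,
      ∃ γ : ℝ → E, γ c = y ∧ IsIntegralCurveOn γ (fun t => A t) (Icc c b) by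
    obtain ⟨k, hk⟩ := exists_nat_ge ((b - a) / h)
    exact H k a ⟨le_rfl, hab⟩ ((div_le_iff₀ hh).1 hk) x
  intro k
  induction k with
  | zero =>
    intro c hc hcb y
    refine exists_isIntegralCurveOn_clm_of_mul_le hc.2 (hA.mono (hsub hc.1 le_rfl))
      (fun t ht => hB t (hsub hc.1 le_rfl ht)) ?_ y
    have : b - c ≤ 0 := by simpa using hcb
    nlinarith [B.2]
  | succ k ih =>
    intro c hc hcb y
    set d := min b (c + h)
    have hcd : c ≤ d := le_min hc.2 (by linarith)
    have hdb : d ≤ b := min_le_left _ _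
    obtain ⟨γ₁, hγ₁c, hγ₁⟩ := exists_isIntegralCurveOn_clm_of_mul_le hcd
      (hA.mono (hsub hc.1 hdb)) (fun t ht => hB t (hsub hc.1 hdb ht))
      (by nlinarith [min_le_right b (c + h), B.2]) y
    have hbd : b - d ≤ k * h := by
      rcases min_cases b (c + h) with ⟨hd, -⟩ | ⟨hd, -⟩ <;> rw [show d = _ from hd]
      · simp only [sub_self]; positivity
      · push_cast at hcb; linarith
    obtain ⟨γ₂, hγ₂d, hγ₂⟩ := ih d ⟨hc.1.trans hcd, hdb⟩ hbd (γ₁ d)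
    refine ⟨fun t => if t ≤ d then γ₁ t else γ₂ t, by simp [hcd, hγ₁c], ?_⟩
    rw [← Icc_union_Icc_eq_Icc hcd hdb]
    refine (hγ₁.congr fun t ht => if_pos ht.2).union isClosed_Icc isClosed_Icc
      (hγ₂.congr fun t ht => ?_)
    rcases ht.1.eq_or_lt with rfl | hlt
    · simp [hγ₂d]
    · simp [hlt.not_ge]

theorem IsIntegralCurveOn.eqOn_clm {γ γ' : ℝ → E} (hA : ContinuousOn A (Icc a b))
    (h : IsIntegralCurveOn γ (fun t => A t) (Icc a b))
    (h' : IsIntegralCurveOn γ' (fun t => A t) (Icc a b)) (ha : γ a = γ' a) :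
    EqOn γ γ' (Icc a b) := by
  obtain ⟨B, hB⟩ := isCompact_Icc.exists_nnnorm_le_of_continuousOn hA
  exact ODE_solution_unique_of_mem_Icc_right (s := fun _ => univ)
    (fun t ht => ((A t).lipschitz.weaken (hB t (Ico_subset_Icc_self ht))).lipschitzOnWith)
    h.continuousOn h.hasDerivWithinAt_Ici (fun _ _ => trivial)
    h'.continuousOn h'.hasDerivWithinAt_Ici (fun _ _ => trivial) ha

theorem exists_linearMap_apply_eq_of_isIntegralCurveOn_clm [CompleteSpace E] (hab : a ≤ b)
    (hA : ContinuousOn A (Icc a b)) :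
    ∃ Y : E →ₗ[ℝ] E, ∀ γ : ℝ → E, IsIntegralCurveOn γ (fun t => A t) (Icc a b) →
      γ b = Y (γ a) := by
  choose γ hγa hγ using exists_isIntegralCurveOn_clm hab hA
  have hb : b ∈ Icc a b := ⟨hab, le_rfl⟩
  refine ⟨{ toFun := fun x => γ x b
            map_add' := fun x y => (hγ (x + y)).eqOn_clm hA ((hγ x).add_clm (hγ y))
              (by simp [hγa]) hb
            map_smul' := fun c x => (hγ (c • x)).eqOn_clm hA ((hγ x).const_smul_clm c)
              (by simp [hγa]) hb }, fun η hη => ?_⟩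
  exact hη.eqOn_clm hA (hγ (η a)) (hγa _).symm hb

lemma gronwallBound_zero_eq_mul (K ε x : ℝ) :
    gronwallBound 0 K ε x = ε * gronwallBound 0 K 1 x := by
  unfold gronwallBound
  split_ifs <;> ring

section Perturbation

variable {B : ℝ≥0} {η : ℝ} {γ : ℝ → E} {v : ℝ → E → E}

theorem IsIntegralCurveOn.norm_le_of_norm_sub_clm_le (hγ : IsIntegralCurveOn γ v (Icc a b))
    (hB : ∀ t ∈ Icc a b, ‖A t‖₊ ≤ B)
    (hv : ∀ t ∈ Icc a b, ‖v t (γ t) - A t (γ t)‖ ≤ η * ‖γ t‖) :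
    ∀ t ∈ Icc a b, ‖γ t‖ ≤ ‖γ a‖ * Real.exp ((B + η) * (t - a)) := by
  intro t ht
  have hbound : ∀ s ∈ Ico a b, ‖v s (γ s)‖ ≤ (B + η) * ‖γ s‖ + 0 := by
    intro s hs
    have hs := Ico_subset_Icc_self hs
    have hAs : ‖A s‖ ≤ B := hB s hs
    calc ‖v s (γ s)‖ ≤ ‖A s (γ s)‖ + ‖v s (γ s) - A s (γ s)‖ := norm_le_insert' _ _
      _ ≤ ‖A s‖ * ‖γ s‖ + η * ‖γ s‖ := add_le_add ((A s).le_opNorm _) (hv s hs)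
      _ ≤ (B + η) * ‖γ s‖ + 0 := by nlinarith [norm_nonneg (γ s)]
  simpa [gronwallBound_ε0] using norm_le_gronwallBound_of_norm_deriv_right_le hγ.continuousOn
    hγ.hasDerivWithinAt_Ici le_rfl hbound t ht

theorem IsIntegralCurveOn.norm_sub_le_of_norm_sub_clm_le (hab : a ≤ b)
    (hγ : IsIntegralCurveOn γ v (Icc a b)) (hB : ∀ t ∈ Icc a b, ‖A t‖₊ ≤ B)
    (hη₀ : 0 ≤ η) (hη₁ : η ≤ 1)
    (hv : ∀ t ∈ Icc a b, ‖v t (γ t) - A t (γ t)‖ ≤ η * ‖γ t‖) {γ₀ : ℝ → E}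
    (hγ₀ : IsIntegralCurveOn γ₀ (fun t => A t) (Icc a b)) (ha : γ a = γ₀ a) :
    ‖γ b - γ₀ b‖ ≤
      η * ‖γ a‖ * (Real.exp ((B + 1) * (b - a)) * gronwallBound 0 B 1 (b - a)) := by
  set ε := η * ‖γ a‖ * Real.exp ((B + 1) * (b - a))
  have hε : ∀ t ∈ Ico a b, dist (v t (γ t)) (A t (γ t)) ≤ ε := by
    intro t ht
    have ht := Ico_subset_Icc_self ht
    rw [dist_eq_norm]
    calc ‖v t (γ t) - A t (γ t)‖ ≤ η * ‖γ t‖ := hv t ht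
      _ ≤ η * (‖γ a‖ * Real.exp ((B + η) * (t - a))) :=
        by gcongr; exact hγ.norm_le_of_norm_sub_clm_le hB hv t ht
      _ ≤ η * ‖γ a‖ * Real.exp ((B + 1) * (b - a)) := by
        rw [← mul_assoc]
        gcongr
        exacts [sub_nonneg.2 ht.1, ht.2]
  have hexact : ∀ t ∈ Ico a b, dist (A t (γ₀ t)) (A t (γ₀ t)) ≤ 0 := fun t _ => (dist_self _).le
  have := dist_le_of_approx_trajectories_ODE_of_mem (v := fun t => A t) (s := fun _ => univ)
    (fun t ht => ((A t).lipschitz.weaken (hB t (Ico_subset_Icc_self ht))).lipschitzOnWith)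
    hγ.continuousOn hγ.hasDerivWithinAt_Ici hε (fun _ _ => trivial)
    hγ₀.continuousOn hγ₀.hasDerivWithinAt_Ici hexact (fun _ _ => trivial) (dist_le_zero.2 ha)
    b ⟨hab, le_rfl⟩
  rw [dist_eq_norm, add_zero, gronwallBound_zero_eq_mul] at this
  exact this.trans_eq (by ring)

end Perturbation

theorem exists_pos_eq_zero_of_norm_sub_clm_le [FiniteDimensional ℝ E] (hab : a ≤ b)
    (hA : ContinuousOn A (Icc a b)) {V : Submodule ℝ (E × E)}
    (hlin : ∀ γ : ℝ → E, IsIntegralCurveOn γ (fun t => A t) (Icc a b) → (γ a, γ b) ∈ V →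
      γ a = 0) :
    ∃ η > 0, ∀ (γ : ℝ → E) (v : ℝ → E → E), IsIntegralCurveOn γ v (Icc a b) →
      (∀ t ∈ Icc a b, ‖v t (γ t) - A t (γ t)‖ ≤ η * ‖γ t‖) → (γ a, γ b) ∈ V →
      ∀ t ∈ Icc a b, γ t = 0 := by
  obtain ⟨B, hB⟩ := isCompact_Icc.exists_nnnorm_le_of_continuousOn hA
  obtain ⟨Y, hY⟩ := exists_linearMap_apply_eq_of_isIntegralCurveOn_clm hab hA
  obtain ⟨K, hK⟩ : ∃ K : ℝ≥0, ∀ x y, (x, y) ∈ V → ‖x‖ ≤ K * ‖Y x - y‖ := by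
    refine Y.exists_norm_le_mul_norm_sub V.closed_of_finiteDimensional fun x hx => ?_
    obtain ⟨γ, rfl, hγ⟩ := exists_isIntegralCurveOn_clm hab hA x
    exact hlin γ hγ (hY γ hγ ▸ hx)
  set C := Real.exp ((B + 1) * (b - a)) * gronwallBound 0 B 1 (b - a)
  have hC : 0 ≤ C := by
    have := gronwallBound_mono le_rfl zero_le_one B.2 (sub_nonneg.2 hab)
    rw [gronwallBound_x0] at this
    positivity
  obtain ⟨η, hη, hηKC⟩ := exists_pos_mul_lt one_pos (K * C)
  refine ⟨min η 1, lt_min hη one_pos, fun γ v hγ hv hV => ?_⟩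
  obtain ⟨γ₀, hγ₀a, hγ₀⟩ := exists_isIntegralCurveOn_clm hab hA (γ a)
  have hclose := hγ.norm_sub_le_of_norm_sub_clm_le hab hB (lt_min hη one_pos).le
    (min_le_right η 1) hv hγ₀ hγ₀a.symm
  rw [hY γ₀ hγ₀, hγ₀a] at hclose
  have hsmall : K * C * min η 1 < 1 :=
    (mul_le_mul_of_nonneg_left (min_le_left _ _) (by positivity)).trans_lt hηKC
  have hcontr : ‖γ a‖ ≤ K * C * min η 1 * ‖γ a‖ :=
    calc ‖γ a‖ ≤ K * ‖Y (γ a) - γ b‖ := hK _ _ hV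
      _ ≤ K * (min η 1 * ‖γ a‖ * C) := by rw [norm_sub_rev]; gcongr
      _ = K * C * min η 1 * ‖γ a‖ := by ring
  have ha : γ a = 0 := norm_le_zero_iff.1 (by nlinarith [norm_nonneg (γ a)])
  intro t ht
  simpa [ha] using hγ.norm_le_of_norm_sub_clm_le hB hv t ht

end IntegralCurve

theorem trivial_solution_isolated_general
    (n : ℕ)
    (φ : ℝ → EuclideanSpace ℝ (Fin n) → EuclideanSpace ℝ (Fin n))
    (Dφ : ℝ → EuclideanSpace ℝ (Fin n) →
      (EuclideanSpace ℝ (Fin n) →L[ℝ] EuclideanSpace ℝ (Fin n)))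
    (hDφ : ∀ t ∈ Set.Icc (0 : ℝ) 1, ∀ u, HasFDerivAt (φ t) (Dφ t u) u)
    (hDφcont : ContinuousOn (fun p : ℝ × EuclideanSpace ℝ (Fin n) => Dφ p.1 p.2)
      (Set.Icc (0 : ℝ) 1 ×ˢ Set.univ))
    (hφ0 : ∀ t ∈ Set.Icc (0 : ℝ) 1, φ t 0 = 0)
    (A : ℝ → (EuclideanSpace ℝ (Fin n) →L[ℝ] EuclideanSpace ℝ (Fin n)))
    (hA : ∀ t, A t = Dφ t 0)
    (V : Submodule ℝ (EuclideanSpace ℝ (Fin n) × EuclideanSpace ℝ (Fin n)))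
    (hlin : ∀ u : ℝ → EuclideanSpace ℝ (Fin n),
      (∀ t ∈ Set.Icc (0 : ℝ) 1,
        HasDerivWithinAt u (A t (u t)) (Set.Icc (0 : ℝ) 1) t) →
      (u 0, u 1) ∈ V → ∀ t ∈ Set.Icc (0 : ℝ) 1, u t = 0) :
    ∃ ε > (0 : ℝ), ∀ u : ℝ → EuclideanSpace ℝ (Fin n),
      (∀ t ∈ Set.Icc (0 : ℝ) 1,
        HasDerivWithinAt u (φ t (u t)) (Set.Icc (0 : ℝ) 1) t) →
      (u 0, u 1) ∈ V →
      (∀ t ∈ Set.Icc (0 : ℝ) 1, ‖u t‖ ≤ ε) →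
      ∀ t ∈ Set.Icc (0 : ℝ) 1, u t = 0 := by
  have hAc : ContinuousOn A (Icc 0 1) := by
    rw [funext hA]
    exact hDφcont.comp (continuousOn_id.prodMk continuousOn_const) fun t ht => ⟨ht, trivial⟩
  obtain ⟨η, hη, hrobust⟩ := exists_pos_eq_zero_of_norm_sub_clm_le zero_le_one hAc
    fun γ hγ hV => hlin γ hγ hV 0 ⟨le_rfl, zero_le_one⟩
  obtain ⟨r, hr, happrox⟩ := isCompact_Icc.exists_pos_forall_norm_sub_le_mul hDφ hDφcont hη
  refine ⟨r, hr, fun u hu hV hsmall => hrobust u φ hu (fun t ht => ?_) hV⟩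
  simpa [hφ0 t ht, hA] using happrox t ht (u t) (hsmall t ht)

/-- If the boundary value problem linearised at the trivial
solution, `u' = A(t)u`, `(u(0), u(1)) ∈ V`, has only the trivial solution, then
the trivial solution of the nonlinear problem `u' = φ(t, u)`, `(u(0), u(1)) ∈ V`
is isolated among small solutions: there is `ε > 0` such that every solution
with `sup-norm ≤ ε` on `[0,1]` vanishes identically. -/
theorem trivial_solution_isolated
    (n : ℕ) (hn : 1 ≤ n)
    (φ : ℝ → EuclideanSpace ℝ (Fin n) → EuclideanSpace ℝ (Fin n))
    (hφcont : ContinuousOn (fun p : ℝ × EuclideanSpace ℝ (Fin n) => φ p.1 p.2)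
      (Set.Icc (0 : ℝ) 1 ×ˢ Set.univ))
    (Dφ : ℝ → EuclideanSpace ℝ (Fin n) →
      (EuclideanSpace ℝ (Fin n) →L[ℝ] EuclideanSpace ℝ (Fin n)))
    (hDφ : ∀ t ∈ Set.Icc (0 : ℝ) 1, ∀ u, HasFDerivAt (φ t) (Dφ t u) u)
    (hDφcont : ContinuousOn (fun p : ℝ × EuclideanSpace ℝ (Fin n) => Dφ p.1 p.2)
      (Set.Icc (0 : ℝ) 1 ×ˢ Set.univ))
    (hφ0 : ∀ t ∈ Set.Icc (0 : ℝ) 1, φ t 0 = 0)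
    (A : ℝ → (EuclideanSpace ℝ (Fin n) →L[ℝ] EuclideanSpace ℝ (Fin n)))
    (hA : ∀ t, A t = Dφ t 0)
    (V : Submodule ℝ (EuclideanSpace ℝ (Fin n) × EuclideanSpace ℝ (Fin n)))
    (hlin : ∀ u : ℝ → EuclideanSpace ℝ (Fin n),
      (∀ t ∈ Set.Icc (0 : ℝ) 1,
        HasDerivWithinAt u (A t (u t)) (Set.Icc (0 : ℝ) 1) t) →
      (u 0, u 1) ∈ V → ∀ t ∈ Set.Icc (0 : ℝ) 1, u t = 0) :
    ∃ ε > (0 : ℝ), ∀ u : ℝ → EuclideanSpace ℝ (Fin n),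
      (∀ t ∈ Set.Icc (0 : ℝ) 1,
        HasDerivWithinAt u (φ t (u t)) (Set.Icc (0 : ℝ) 1) t) →
      (u 0, u 1) ∈ V →
      (∀ t ∈ Set.Icc (0 : ℝ) 1, ‖u t‖ ≤ ε) →
      ∀ t ∈ Set.Icc (0 : ℝ) 1, u t = 0 :=
  trivial_solution_isolated_general n φ Dφ hDφ hDφcont hφ0 A hA V hlin
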